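/- arXiv:0904.1291 — 3 statements merged into one kernel-verified Lean document; each statement's English description precedes it below -/
import Mathlib

section
/- Let g ≥ 2 be an integer and let s be a real number with s < -1/3. Then the series 1 + (2g)^{3s}(2g-1) + Σ_{n=2}^{∞} (2g(2g-1)^{n-1})^{3s} · 2g(2g-2)(2g-1)^{n-2} converges and its sum equals 1 + (2g)^{3s}(2g-1) · (1-(2g-1)^{3s-1})/(1-(2g-1)^{3s+1}). -/
open Real

/-- Closed-form evaluation of the spectral zeta function `ζ₁ˣ(s) = Tr(|D|^s)` for a graph of
genus `g ≥ 2`: for `s < -1/3` the series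
`1 + (2g)^(3s)(2g-1) + ∑_{n=2}^∞ (2g(2g-1)^(n-1))^(3s) ⬝ 2g(2g-2)(2g-1)^(n-2)`
converges with sum `1 + (2g)^(3s)(2g-1) ⬝ (1-(2g-1)^(3s-1))/(1-(2g-1)^(3s+1))`. -/
theorem zeta_one_closed_form (g : ℕ) (hg : 2 ≤ g) (s : ℝ) (hs : s < -1/3) :
    HasSum
      (fun n : ℕ => match n with
        | 0 => (1 : ℝ)
        | 1 => (2 * (g : ℝ)) ^ (3 * s) * (2 * (g : ℝ) - 1)
        | (n + 2) =>
            (2 * (g : ℝ) * (2 * (g : ℝ) - 1) ^ (n + 1)) ^ (3 * s) *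
              (2 * (g : ℝ) * (2 * (g : ℝ) - 2) * (2 * (g : ℝ) - 1) ^ n))
      (1 + (2 * (g : ℝ)) ^ (3 * s) * (2 * (g : ℝ) - 1) *
        ((1 - (2 * (g : ℝ) - 1) ^ (3 * s - 1)) / (1 - (2 * (g : ℝ) - 1) ^ (3 * s + 1)))) := by
  have hg' : (2:ℝ) ≤ (g:ℝ) := by exact_mod_cast hg
  set G : ℝ := 2 * (g:ℝ) with hGdef
  have hG4 : (4:ℝ) ≤ G := by rw [hGdef]; linarith
  have hG0 : (0:ℝ) < G := by linarith
  set H : ℝ := G - 1 with hHdef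
  have hH1 : (1:ℝ) < H := by rw [hHdef]; linarith
  have hH0 : (0:ℝ) < H := by linarith
  have hexp : 3 * s + 1 < 0 := by linarith
  set r : ℝ := H ^ (3*s+1) with hrdef
  have hr0 : 0 < r := rpow_pos_of_pos hH0 _
  have hr1 : r < 1 := rpow_lt_one_of_one_lt_of_neg hH1 hexp
  have hr1' : (1:ℝ) - r ≠ 0 := by linarith
  set A : ℝ := G ^ (3*s) * H ^ (3*s) * (G * (G - 2)) with hAdef
  rw [← hasSum_nat_add_iff' 2]
  have geom : HasSum (fun n : ℕ => A * r ^ n) (A * (1 - r)⁻¹) :=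
    (hasSum_geometric_of_lt_one hr0.le hr1).mul_left A
  have key : (fun n : ℕ => (G * H ^ (n+1)) ^ (3*s) * (G * (G - 2) * H ^ n))
      = fun n : ℕ => A * r ^ n := by
    funext n
    have e1 : (G * H ^ (n+1)) ^ (3*s) * (G * (G - 2) * H ^ n)
        = G ^ (3*s) * (G*(G-2)) * H ^ ((((n:ℝ)+1))*(3*s) + n) := by
      rw [mul_rpow hG0.le (pow_nonneg hH0.le _), ← rpow_natCast H (n+1),
        ← rpow_natCast H n, ← rpow_mul hH0.le, rpow_add hH0]
      push_cast
      ring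
    have e2 : A * r ^ n = G ^ (3*s) * (G*(G-2)) * H ^ ((((n:ℝ)+1))*(3*s) + n) := by
      rw [hrdef, ← rpow_natCast (H ^ (3*s+1)) n, ← rpow_mul hH0.le,
        show ((n:ℝ)+1)*(3*s) + n = 3*s + ((3*s+1)*n) by ring, rpow_add hH0, hAdef]
      ring
    rw [e1, e2]
  have h1 : H ^ (3*s+1) = H ^ (3*s) * H := by
    rw [rpow_add hH0, rpow_one]
  have h2 : H ^ (3*s-1) * H = H ^ (3*s) := by
    rw [← rpow_add_one hH0.ne' (3*s-1)]
    norm_num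
  have hBA : G ^ (3*s) * H * ((1 - H ^ (3*s-1)) - (1 - r)) = A := by
    rw [hrdef, h1, hAdef, hHdef] at *
    linear_combination (-(G ^ (3*s))) * h2
  have hval : (1 + G ^ (3*s) * H * ((1 - H ^ (3*s-1)) / (1 - r)))
      - (∑ i ∈ Finset.range 2, (fun n : ℕ => match n with
        | 0 => (1 : ℝ)
        | 1 => G ^ (3 * s) * H
        | (n + 2) => (G * H ^ (n + 1)) ^ (3 * s) * (G * (G - 2) * H ^ n)) i)
      = A * (1 - r)⁻¹ := by
    rw [Finset.sum_range_succ, Finset.sum_range_one]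
    show (1 + G ^ (3*s) * H * ((1 - H ^ (3*s-1)) / (1 - r)))
      - (1 + G ^ (3*s) * H) = A * (1 - r)⁻¹
    rw [← hBA]
    field_simp
    ring
  simpa [key] using hval ▸ (key ▸ geom)
end

section
/- For an integer g ≥ 2 and a real number s, define F_g(s) = 1 + (2g)^{3s}(2g-1) · (1-(2g-1)^{3s-1})/(1-(2g-1)^{3s+1}). If g₁, g₂ ≥ 2 are integers such that F_{g₁}(s) = F_{g₂}(s) for all real s < -1/3, then g₁ = g₂. -/
open Real

private lemma rpow_neg_nat_helper (b : ℝ) (hb : 0 < b) (n : ℕ) :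
    b ^ (-(n : ℝ)) = (b ^ n)⁻¹ := by
  rw [Real.rpow_neg hb.le, Real.rpow_natCast]

private lemma term_simp (a : ℝ) (ha : 3 ≤ a) :
    1 + ((a + 1) ^ 3)⁻¹ * a * ((1 - (a ^ 4)⁻¹) / (1 - (a ^ 2)⁻¹))
      = 1 + (a ^ 2 + 1) / (a * (a + 1) ^ 3) := by
  have h0 : a ≠ 0 := by nlinarith
  have h1 : a + 1 ≠ 0 := by nlinarith
  have h2 : a ^ 2 - 1 ≠ 0 := by nlinarith
  have h3 : (1 : ℝ) - (a ^ 2)⁻¹ ≠ 0 := by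
    have : (1 : ℝ) - (a ^ 2)⁻¹ = (a ^ 2 - 1) / a ^ 2 := by field_simp
    rw [this]
    positivity
  field_simp
  ring

/-- The closed form `F_g(s) = 1 + (2g)^(3s)(2g-1)(1-(2g-1)^(3s-1))/(1-(2g-1)^(3s+1))` of the
spectral zeta function at the unit of the algebra determines the genus: if two genera `g₁, g₂ ≥ 2`
give the same function for all `s < -1/3`, then `g₁ = g₂`. -/
theorem genus_determined_by_zeta_one (g₁ g₂ : ℕ) (hg₁ : 2 ≤ g₁) (hg₂ : 2 ≤ g₂)
    (h : ∀ s : ℝ, s < -1/3 →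
      1 + (2 * (g₁ : ℝ)) ^ (3 * s) * (2 * (g₁ : ℝ) - 1) *
          ((1 - (2 * (g₁ : ℝ) - 1) ^ (3 * s - 1)) / (1 - (2 * (g₁ : ℝ) - 1) ^ (3 * s + 1)))
        = 1 + (2 * (g₂ : ℝ)) ^ (3 * s) * (2 * (g₂ : ℝ) - 1) *
          ((1 - (2 * (g₂ : ℝ) - 1) ^ (3 * s - 1)) / (1 - (2 * (g₂ : ℝ) - 1) ^ (3 * s + 1)))) :
    g₁ = g₂ := by
  have H := h (-1) (by norm_num)
  have hG₁ : (2 : ℝ) ≤ (g₁ : ℝ) := by exact_mod_cast hg₁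
  have hG₂ : (2 : ℝ) ≤ (g₂ : ℝ) := by exact_mod_cast hg₂
  set a₁ : ℝ := 2 * (g₁ : ℝ) - 1 with ha₁def
  set a₂ : ℝ := 2 * (g₂ : ℝ) - 1 with ha₂def
  have ha₁ : 3 ≤ a₁ := by simp [ha₁def]; linarith
  have ha₂ : 3 ≤ a₂ := by simp [ha₂def]; linarith
  have hb₁ : (0 : ℝ) < 2 * (g₁ : ℝ) := by linarith
  have hb₂ : (0 : ℝ) < 2 * (g₂ : ℝ) := by linarith
  have hp₁ : (0 : ℝ) < a₁ := by linarith
  have hp₂ : (0 : ℝ) < a₂ := by linarith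
  have e3 : (3 : ℝ) * (-1) = -((3 : ℕ) : ℝ) := by norm_num
  have e4 : (3 : ℝ) * (-1) - 1 = -((4 : ℕ) : ℝ) := by norm_num
  have e2 : (3 : ℝ) * (-1) + 1 = -((2 : ℕ) : ℝ) := by norm_num
  rw [e4, e2, e3, rpow_neg_nat_helper _ hb₁, rpow_neg_nat_helper _ hb₂,
    rpow_neg_nat_helper _ hp₁, rpow_neg_nat_helper _ hp₂,
    rpow_neg_nat_helper _ hp₁, rpow_neg_nat_helper _ hp₂] at H
  have hx₁ : 2 * (g₁ : ℝ) = a₁ + 1 := by rw [ha₁def]; ring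
  have hx₂ : 2 * (g₂ : ℝ) = a₂ + 1 := by rw [ha₂def]; ring
  rw [hx₁, hx₂, term_simp a₁ ha₁, term_simp a₂ ha₂] at H
  have H' : (a₁ ^ 2 + 1) / (a₁ * (a₁ + 1) ^ 3) = (a₂ ^ 2 + 1) / (a₂ * (a₂ + 1) ^ 3) := by
    linarith
  have hd₁ : (0 : ℝ) < a₁ * (a₁ + 1) ^ 3 := by positivity
  have hd₂ : (0 : ℝ) < a₂ * (a₂ + 1) ^ 3 := by positivity
  rw [div_eq_div_iff hd₁.ne' hd₂.ne'] at H'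
  -- cross-multiplied: (a₁²+1)·a₂(a₂+1)³ = (a₂²+1)·a₁(a₁+1)³, factors as (a₂-a₁)·Q = 0
  have hQ : (0 : ℝ) <
      1 + 3*a₂ + 3*a₂^2 + a₂^3 + 3*a₁ + 2*a₁*a₂ + a₁*a₂^2 + 3*a₁^2 + a₁^2*a₂
        + 3*a₁^2*a₂^2 + a₁^2*a₂^3 + a₁^3 + a₁^3*a₂^2 := by positivity
  have hfac : (a₂ - a₁) *
      (1 + 3*a₂ + 3*a₂^2 + a₂^3 + 3*a₁ + 2*a₁*a₂ + a₁*a₂^2 + 3*a₁^2 + a₁^2*a₂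
        + 3*a₁^2*a₂^2 + a₁^2*a₂^3 + a₁^3 + a₁^3*a₂^2) = 0 := by
    linear_combination H'
  have haa : a₁ = a₂ := by
    rcases mul_eq_zero.1 hfac with h' | h'
    · linarith
    · linarith
  have : (g₁ : ℝ) = (g₂ : ℝ) := by
    rw [ha₁def, ha₂def] at haa; linarith
  exact_mod_cast this
end

section
/- Let g ≥ 2 be an integer, let l > 0 be a real number, and let s be a real number. The family γ ↦ exp(-s · l · |γ|) over all elements γ of the free group on g generators is summable if and only if s > log(2g-1)/l. (In particular, the Poincaré series of the free group acting on its Cayley tree with edge length l has critical exponent log(2g-1)/l and diverges at the critical exponent, i.e., the free group is a divergence group.) -/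
/-!
A nontrivial reduced word in `g` generators is a first letter followed by letters each of which
avoids the inverse of its predecessor, so after the first letter there are exactly `2g - 1`
choices at every step. Coding these choices by `Fin (2g - 1)` identifies the reduced words
following a given letter with all lists over `Fin (2g - 1)`, so the Poincaré series is, up to
finitely many terms and a constant factor, the geometric series in `(2g - 1) e^{-sl}`. It
converges iff that ratio is `< 1`, i.e. iff `s > log (2g - 1) / l`; at equality every term of
the geometric series is `1`.
-/

open Real

section Summability

variable {X Y G : Type*} [AddCommGroup G] [TopologicalSpace G] [IsTopologicalAddGroup G]

theorem summable_comp_iff_of_finite_compl_range {f : X → G} {g : Y → X}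
    (hg : Function.Injective g) (hfin : (Set.range g)ᶜ.Finite) :
    Summable (f ∘ g) ↔ Summable f := by
  rw [← hfin.summable_compl_iff, compl_compl]
  exact (Equiv.ofInjective g hg).summable_iff (f := fun x : Set.range g => f x)

end Summability

namespace List

theorem summable_pow_length_iff {γ : Type*} [Fintype γ] {r : ℝ} (hr : 0 ≤ r) :
    Summable (fun L : List γ => r ^ L.length) ↔ Fintype.card γ * r < 1 := by
  rw [← equivSigmaTuple.symm.summable_iff, Function.comp_def,
    summable_sigma_of_nonneg (fun _ => pow_nonneg hr _)]
  have hlevel (n : ℕ) : ∑' _ : Fin n → γ, r ^ n = (Fintype.card γ * r) ^ n := by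
    simp [tsum_fintype, mul_pow]
  simp only [equivSigmaTuple_symm_apply, length_ofFn, hlevel,
    and_iff_right (fun n => Summable.of_finite), summable_geometric_iff_norm_lt_one,
    Real.norm_eq_abs, abs_of_nonneg (mul_nonneg (Nat.cast_nonneg _) hr)]

variable {β : Type*} {R : β → β → Prop} {k : ℕ}

section Walks

variable (e : ∀ x, {y // R x y} ≃ Fin k)

/-- The walk along `R` from `x` in which the `i`-th code picks the next vertex among the `k`
successors of the current one. -/
def walkOfCodes : β → List (Fin k) → List β
  | _, [] => []
  | x, i :: is => ((e x).symm i).1 :: walkOfCodes ((e x).symm i).1 is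

theorem length_walkOfCodes (x : β) (is : List (Fin k)) :
    (walkOfCodes e x is).length = is.length := by
  induction is generalizing x with
  | nil => rfl
  | cons i is ih => simp [walkOfCodes, ih]

theorem isChain_cons_walkOfCodes (x : β) (is : List (Fin k)) :
    (x :: walkOfCodes e x is).IsChain R := by
  induction is generalizing x with
  | nil => exact isChain_singleton x
  | cons i is ih => exact isChain_cons_cons.2 ⟨((e x).symm i).2, ih _⟩

theorem walkOfCodes_injective (x : β) : Function.Injective (walkOfCodes e x) := by
  intro is js h
  induction is generalizing x js with
  | nil => cases js <;> simp_all [walkOfCodes]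
  | cons i is ih =>
    cases js with
    | nil => simp [walkOfCodes] at h
    | cons j js =>
      obtain ⟨hij, h⟩ := cons_eq_cons.1 h
      obtain rfl : i = j := (e x).symm.injective (Subtype.ext hij)
      rw [ih _ h]

theorem exists_walkOfCodes_eq {x : β} {L : List β} (h : (x :: L).IsChain R) :
    ∃ is, walkOfCodes e x is = L := by
  induction L generalizing x with
  | nil => exact ⟨[], rfl⟩
  | cons y L ih =>
    obtain ⟨hxy, hL⟩ := isChain_cons_cons.1 h
    obtain ⟨is, his⟩ := ih hL
    exact ⟨e x ⟨y, hxy⟩ :: is, by simp [walkOfCodes, his]⟩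

noncomputable def walkEquiv (x : β) : List (Fin k) ≃ {L : List β // (x :: L).IsChain R} :=
  Equiv.ofBijective (fun is => ⟨walkOfCodes e x is, isChain_cons_walkOfCodes e x is⟩)
    ⟨fun _ _ h => walkOfCodes_injective e x (congrArg Subtype.val h),
      fun L => (exists_walkOfCodes_eq e L.2).imp fun _ h => Subtype.ext h⟩

end Walks

theorem summable_pow_length_isChain_cons_iff (e : ∀ x, {y // R x y} ≃ Fin k) {r : ℝ}
    (hr : 0 ≤ r) (x : β) :
    Summable (fun L : {L : List β // (x :: L).IsChain R} => r ^ L.1.length) ↔ k * r < 1 := by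
  have hcodes := summable_pow_length_iff (γ := Fin k) hr
  rw [Fintype.card_fin] at hcodes
  rw [← hcodes, ← (walkEquiv e x).summable_iff]
  exact summable_congr fun is => congrArg (r ^ ·) (length_walkOfCodes e x is)

theorem summable_pow_length_isChain_iff [Finite β] [Nonempty β]
    (e : ∀ x, {y // R x y} ≃ Fin k) {r : ℝ} (hr : 0 < r) :
    Summable (fun L : {L : List β // L.IsChain R} => r ^ L.1.length) ↔ k * r < 1 := by
  let cons : (Σ x, {L : List β // (x :: L).IsChain R}) → {L : List β // L.IsChain R} :=
    fun p => ⟨p.1 :: p.2.1, p.2.2⟩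
  have hcons : Function.Injective cons := by
    rintro ⟨x, L, hL⟩ ⟨y, M, hM⟩ h
    obtain ⟨rfl, rfl⟩ := cons_eq_cons.1 (congrArg Subtype.val h)
    rfl
  have hrange : (Set.range cons)ᶜ ⊆ {⟨[], isChain_nil⟩} := by
    rintro ⟨_ | ⟨x, L⟩, hL⟩ hnot
    · rfl
    · exact absurd ⟨⟨x, L, hL⟩, rfl⟩ hnot
  rw [← summable_comp_iff_of_finite_compl_range hcons ((Set.finite_singleton _).subset hrange),
    Function.comp_def, summable_sigma_of_nonneg (fun _ => by positivity)]
  simp only [cons, length_cons, pow_succ, summable_mul_right_iff hr.ne',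
    summable_pow_length_isChain_cons_iff e hr.le]
  exact ⟨fun h => h.1 (Classical.arbitrary β), fun h => ⟨fun _ => h, Summable.of_finite⟩⟩

end List

namespace FreeGroup

variable {α : Type*} [DecidableEq α]

def reducedWordEquiv : FreeGroup α ≃ {L : List (α × Bool) // IsReduced L} where
  toFun x := ⟨x.toWord, isReduced_toWord⟩
  invFun L := mk L.1
  left_inv _ := mk_toWord
  right_inv L := Subtype.ext L.2.reduce_eq

theorem card_reducedSuccessors [Fintype α] (x : α × Bool) :
    Fintype.card {y : α × Bool // x.1 = y.1 → x.2 = y.2} = 2 * Fintype.card α - 1 := by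
  have hsucc : Finset.univ.filter (fun y : α × Bool => x.1 = y.1 → x.2 = y.2) =
      Finset.univ.erase (x.1, !x.2) := by
    ext ⟨a, b⟩
    obtain ⟨c, d⟩ := x
    cases b <;> cases d <;> simp [@eq_comm _ c]
  rw [Fintype.card_subtype, hsucc, Finset.card_erase_of_mem (Finset.mem_univ _),
    Finset.card_univ, Fintype.card_prod, Fintype.card_bool, mul_comm]

theorem summable_pow_norm_iff [Fintype α] [Nonempty α] {r : ℝ} (hr : 0 < r) :
    Summable (fun x : FreeGroup α => r ^ x.norm) ↔
      ((2 * Fintype.card α - 1 : ℕ) : ℝ) * r < 1 := by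
  have hgroup := (reducedWordEquiv (α := α)).summable_iff (f := fun L => r ^ L.1.length)
  have hwords := List.summable_pow_length_isChain_iff
    (R := fun a b : α × Bool => a.1 = b.1 → a.2 = b.2)
    (fun x => Fintype.equivFinOfCardEq (card_reducedSuccessors x)) hr
  exact hgroup.trans hwords

end FreeGroup

/-- The Poincaré series of the free group of rank `g ≥ 2` acting on its Cayley tree with edge
length `l > 0`: the family `γ ↦ exp(-s·l·|γ|)` over the free group is summable iff
`s > log(2g-1)/l`; in particular the critical exponent is `log(2g-1)/l` and the series diverges
at the critical exponent (the free group is a divergence group). -/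
theorem freeGroup_poincare_series_summable_iff (g : ℕ) (hg : 2 ≤ g) (l : ℝ) (hl : 0 < l)
    (s : ℝ) :
    Summable (fun γ : FreeGroup (Fin g) => Real.exp (-(s * l * (γ.norm : ℝ)))) ↔
      Real.log (2 * (g : ℝ) - 1) / l < s := by
  have : Nonempty (Fin g) := ⟨⟨0, by omega⟩⟩
  have hbranch : ((2 * Fintype.card (Fin g) - 1 : ℕ) : ℝ) = 2 * g - 1 := by
    rw [Fintype.card_fin, Nat.cast_sub (by omega)]
    push_cast
    ring
  have hbranch_pos : (0 : ℝ) < 2 * g - 1 := by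
    have : (2 : ℝ) ≤ g := by exact_mod_cast hg
    linarith
  have hterm (γ : FreeGroup (Fin g)) : exp (-(s * l * γ.norm)) = exp (-(s * l)) ^ γ.norm := by
    rw [← exp_nat_mul]
    congr 1
    ring
  have hratio : (2 * g - 1) * exp (-(s * l)) = exp (log (2 * g - 1) - s * l) := by
    rw [exp_sub, exp_log hbranch_pos, exp_neg, div_eq_mul_inv]
  simp_rw [hterm]
  rw [FreeGroup.summable_pow_norm_iff (exp_pos _), hbranch, hratio, exp_lt_one_iff, sub_neg,
    div_lt_iff₀ hl]
end
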